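/- arXiv:2501.06045 — 2 statements merged into one kernel-verified Lean document; each statement's English description precedes it below -/
import Mathlib

section
/- Let H be a Hopf algebra over a field k with bijective antipode S, and let C = H/I be a left H-module factor coalgebra of H (I a left ideal coideal). Then the right coideal subalgebra of left C-coinvariants {h ∈ H : (π ⊗ id)Δ(h) = π(1) ⊗ h} equals S applied to the left coideal subalgebra of right C-coinvariants {h ∈ H : (id ⊗ π)Δ(h) = h ⊗ π(1)}, where π : H → C is the quotient map. -/
open TensorProduct LinearMap Coalgebra HopfAlgebra

/-- A subspace `I` of `H` is a coideal: `Δ(I) ⊆ I ⊗ H + H ⊗ I` and `ε(I) = 0`. -/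
def IsCoideal (k H : Type*) [CommRing k] [Ring H] [HopfAlgebra k H]
    (I : Submodule k H) : Prop :=
  (∀ x ∈ I, Coalgebra.comul x ∈
      LinearMap.range (TensorProduct.mapIncl I (⊤ : Submodule k H)) ⊔
        LinearMap.range (TensorProduct.mapIncl (⊤ : Submodule k H) I)) ∧
    ∀ x ∈ I, Coalgebra.counit (R := k) x = 0

/-- The set of left `C`-coinvariants of `H` for the left `H`-module factor coalgebra
`C = H/I`, i.e. `{h : (π ⊗ id)Δ(h) = π(1) ⊗ h}` with `π : H → H/I` the quotient map. -/
noncomputable def leftCoinvariants (k H : Type*) [CommRing k] [Ring H] [HopfAlgebra k H]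
    (I : Submodule k H) : Set H :=
  {h : H | LinearMap.rTensor H I.mkQ (Coalgebra.comul h) = I.mkQ 1 ⊗ₜ[k] h}

/-- The set of right `C`-coinvariants of `H` for `C = H/I`,
i.e. `{h : (id ⊗ π)Δ(h) = h ⊗ π(1)}`. -/
noncomputable def rightCoinvariants (k H : Type*) [CommRing k] [Ring H] [HopfAlgebra k H]
    (I : Submodule k H) : Set H :=
  {h : H | LinearMap.lTensor H I.mkQ (Coalgebra.comul h) = h ⊗ₜ[k] I.mkQ 1}


open TensorProduct LinearMap Coalgebra HopfAlgebra Bialgebra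

noncomputable section

namespace HopfProofAux

variable {k H : Type*} [CommSemiring k] [Semiring H] [Bialgebra k H]

lemma sum_counit_smul_right {a : H} {ι : Type*} (r : Coalgebra.Repr k a ι) :
    ∑ i ∈ r.index, Coalgebra.counit (R := k) (r.left i) • r.right i = a := by
  have h := Coalgebra.sum_counit_tmul_eq r
  apply_fun (TensorProduct.lid k H) at h
  rw [map_sum] at h
  simpa only [TensorProduct.lid_tmul, one_smul] using h

lemma sum_counit_smul_left {a : H} {ι : Type*} (r : Coalgebra.Repr k a ι) :
    ∑ i ∈ r.index, Coalgebra.counit (R := k) (r.right i) • r.left i = a := by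
  have h := Coalgebra.sum_tmul_counit_eq r
  apply_fun (TensorProduct.rid k H) at h
  rw [map_sum] at h
  simpa only [TensorProduct.rid_tmul, one_smul] using h

variable (k) in
/-- Convolution product. -/
def conv {B : Type*} [Semiring B] [Algebra k B] (f g : H →ₗ[k] B) : H →ₗ[k] B :=
  LinearMap.mul' k B ∘ₗ TensorProduct.map f g ∘ₗ Coalgebra.comul

variable {B : Type*} [Semiring B] [Algebra k B]

lemma conv_repr (f g : H →ₗ[k] B) {a : H} {ι : Type*} (r : Coalgebra.Repr k a ι) :
    conv k f g a = ∑ i ∈ r.index, f (r.left i) * g (r.right i) := by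
  simp only [conv, comp_apply, ← r.eq, map_sum, TensorProduct.map_tmul, mul'_apply]

variable (k B) in
def convUnit : H →ₗ[k] B := Algebra.linearMap k B ∘ₗ Coalgebra.counit

lemma convUnit_apply (a : H) :
    convUnit k B a = algebraMap k B (Coalgebra.counit (R := k) a) := rfl

lemma conv_unit_left (f : H →ₗ[k] B) : conv k (convUnit k B) f = f := by
  ext a
  rw [conv_repr _ _ (ℛ k a)]
  conv_rhs => rw [← sum_counit_smul_right (ℛ k a)]
  rw [map_sum]
  exact Finset.sum_congr rfl fun i _ => by
    rw [convUnit_apply, map_smul, Algebra.smul_def]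

lemma conv_unit_right (f : H →ₗ[k] B) : conv k f (convUnit k B) = f := by
  ext a
  rw [conv_repr _ _ (ℛ k a)]
  conv_rhs => rw [← sum_counit_smul_left (ℛ k a)]
  rw [map_sum]
  exact Finset.sum_congr rfl fun i _ => by
    rw [convUnit_apply, map_smul, Algebra.smul_def, Algebra.commutes]

lemma conv_assoc (f g p : H →ₗ[k] B) :
    conv k (conv k f g) p = conv k f (conv k g p) := by
  ext a
  set r := ℛ k a with hr
  set a₁ : (i : r.ι) → Coalgebra.Repr k (r.left i) (H × H) := fun i => ℛ k (r.left i) with ha₁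
  set a₂ : (i : r.ι) → Coalgebra.Repr k (r.right i) (H × H) := fun i => ℛ k (r.right i) with ha₂
  have key := Coalgebra.sum_tmul_tmul_eq r a₁ a₂
  have key2 := congrArg (LinearMap.mul' k B ∘ₗ
    TensorProduct.map f (LinearMap.mul' k B ∘ₗ TensorProduct.map g p)) key
  simp only [map_sum, comp_apply, TensorProduct.map_tmul, mul'_apply] at key2
  rw [conv_repr _ _ r, conv_repr _ _ r]
  calc ∑ i ∈ r.index, conv k f g (r.left i) * p (r.right i)
      = ∑ i ∈ r.index, ∑ j ∈ (a₁ i).index,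
          f ((a₁ i).left j) * (g ((a₁ i).right j) * p (r.right i)) := by
        refine Finset.sum_congr rfl fun i _ => ?_
        rw [conv_repr _ _ (a₁ i), Finset.sum_mul]
        exact Finset.sum_congr rfl fun j _ => mul_assoc _ _ _
    _ = ∑ i ∈ r.index, ∑ j ∈ (a₂ i).index,
          f (r.left i) * (g ((a₂ i).left j) * p ((a₂ i).right j)) := key2
    _ = ∑ i ∈ r.index, f (r.left i) * conv k g p (r.right i) := by
        refine Finset.sum_congr rfl fun i _ => ?_
        rw [conv_repr _ _ (a₂ i), Finset.mul_sum]

lemma conv_unique (f g g' : H →ₗ[k] B) (h1 : conv k f g = convUnit k B)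
    (h2 : conv k g' f = convUnit k B) : g' = g := by
  have : conv k g' (conv k f g) = conv k (conv k g' f) g := (conv_assoc _ _ _).symm
  rwa [h1, h2, conv_unit_right, conv_unit_left] at this

variable {k H : Type*} [CommSemiring k] [Semiring H] [HopfAlgebra k H]

lemma antipode_one' : antipode (R := k) (1 : H) = 1 := by
  have h := mul_antipode_rTensor_comul_apply (R := k) (a := (1 : H))
  rw [Bialgebra.comul_one, Algebra.TensorProduct.one_def] at h
  simpa using h

lemma counit_antipode' (a : H) :
    Coalgebra.counit (R := k) (antipode (R := k) a) = Coalgebra.counit (R := k) a := by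
  have key : Coalgebra.counit (R := k)
      (∑ i ∈ (ℛ k a).index, antipode (R := k) ((ℛ k a).left i) * (ℛ k a).right i)
      = Coalgebra.counit (R := k) a := by
    rw [sum_antipode_mul_eq_algebraMap_counit (ℛ k a), Bialgebra.counit_algebraMap]
  rw [map_sum] at key
  simp only [Bialgebra.counit_mul] at key
  conv_lhs => rw [← sum_counit_smul_left (ℛ k a)]
  simp only [map_sum, map_smul, smul_eq_mul]
  rw [← key]
  exact Finset.sum_congr rfl fun i _ => mul_comm _ _


lemma lemmaA (u w : H) {ι : Type*} (rw : Coalgebra.Repr k w ι) :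
    ∑ j ∈ rw.index,
      (antipode (R := k) (rw.left j) ⊗ₜ[k] antipode (R := k) u) * Coalgebra.comul (rw.right j)
    = (1 : H) ⊗ₜ[k] (antipode (R := k) u * w) := by
  set b₁ : (j : rw.ι) → Coalgebra.Repr k (rw.left j) (H × H) := fun j => ℛ k (rw.left j) with hb₁
  set b₂ : (j : rw.ι) → Coalgebra.Repr k (rw.right j) (H × H) := fun j => ℛ k (rw.right j) with hb₂
  have key := Coalgebra.sum_tmul_tmul_eq rw b₁ b₂
  have key2 := congrArg (TensorProduct.map
      (LinearMap.mul' k H ∘ₗ (antipode (R := k) (A := H)).rTensor H)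
      (LinearMap.mulLeft k (antipode (R := k) u)) ∘ₗ
      (TensorProduct.assoc k H H H).symm.toLinearMap) key
  simp only [map_sum, comp_apply, LinearEquiv.coe_coe, TensorProduct.assoc_symm_tmul,
    TensorProduct.map_tmul, rTensor_tmul, mul'_apply, mulLeft_apply] at key2
  calc ∑ j ∈ rw.index,
      (antipode (R := k) (rw.left j) ⊗ₜ[k] antipode (R := k) u) * Coalgebra.comul (rw.right j)
      = ∑ j ∈ rw.index, ∑ j' ∈ (b₂ j).index,
          (antipode (R := k) (rw.left j) * (b₂ j).left j') ⊗ₜ[k]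
            (antipode (R := k) u * (b₂ j).right j') := by
        refine Finset.sum_congr rfl fun j _ => ?_
        rw [← (b₂ j).eq, Finset.mul_sum]
        exact Finset.sum_congr rfl fun j' _ => Algebra.TensorProduct.tmul_mul_tmul _ _ _ _
    _ = ∑ j ∈ rw.index, ∑ j' ∈ (b₁ j).index,
          (antipode (R := k) ((b₁ j).left j') * (b₁ j).right j') ⊗ₜ[k]
            (antipode (R := k) u * rw.right j) := key2.symm
    _ = ∑ j ∈ rw.index, Coalgebra.counit (R := k) (rw.left j) •
          ((1 : H) ⊗ₜ[k] (antipode (R := k) u * rw.right j)) := by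
        refine Finset.sum_congr rfl fun j _ => ?_
        rw [← TensorProduct.sum_tmul, sum_antipode_mul_eq_algebraMap_counit (b₁ j),
          Algebra.algebraMap_eq_smul_one, TensorProduct.smul_tmul']
    _ = (1 : H) ⊗ₜ[k] (antipode (R := k) u * w) := by
        have hw : (1 : H) ⊗ₜ[k] (antipode (R := k) u * w)
            = ((TensorProduct.mk k H H 1).comp (LinearMap.mulLeft k (antipode (R := k) u))) w :=
          rfl
        rw [hw]
        conv_rhs => rw [← sum_counit_smul_right rw]
        rw [map_sum]
        exact Finset.sum_congr rfl fun j _ => by rw [map_smul]; rfl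

lemma conv_comul_comulAntipode :
    conv k (Coalgebra.comul (R := k) (A := H))
      (Coalgebra.comul ∘ₗ antipode (R := k) (A := H)) = convUnit k (H ⊗[k] H) := by
  ext a
  rw [conv_repr _ _ (ℛ k a)]
  have step : ∀ i ∈ (ℛ k a).index,
      Coalgebra.comul (R := k) ((ℛ k a).left i) *
        (Coalgebra.comul ∘ₗ antipode (R := k) (A := H)) ((ℛ k a).right i)
      = Coalgebra.comul (R := k)
          ((ℛ k a).left i * antipode (R := k) ((ℛ k a).right i)) := fun i _ => by
    rw [comp_apply, Bialgebra.comul_mul]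
  rw [Finset.sum_congr rfl step, ← map_sum, sum_mul_antipode_eq_algebraMap_counit (ℛ k a),
    Bialgebra.comul_algebraMap]
  rfl

lemma conv_antipodeFlip_comul :
    conv k (TensorProduct.map (antipode (R := k) (A := H)) (antipode k) ∘ₗ
        (TensorProduct.comm k H H).toLinearMap ∘ₗ Coalgebra.comul)
      (Coalgebra.comul (R := k) (A := H)) = convUnit k (H ⊗[k] H) := by
  ext a
  set r := ℛ k a with hrdef
  set a₁ : (i : r.ι) → Coalgebra.Repr k (r.left i) (H × H) := fun i => ℛ k (r.left i) with ha₁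
  set a₂ : (i : r.ι) → Coalgebra.Repr k (r.right i) (H × H) := fun i => ℛ k (r.right i) with ha₂
  have key := Coalgebra.sum_tmul_tmul_eq r a₁ a₂
  have key2 := congrArg (LinearMap.mul' k (H ⊗[k] H) ∘ₗ
      TensorProduct.map
        (TensorProduct.map (antipode (R := k)) (antipode (R := k)) ∘ₗ
          (TensorProduct.comm k H H).toLinearMap)
        Coalgebra.comul ∘ₗ
      (TensorProduct.assoc k H H H).symm.toLinearMap) key
  simp only [map_sum, comp_apply, LinearEquiv.coe_coe, TensorProduct.assoc_symm_tmul,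
    TensorProduct.map_tmul, TensorProduct.comm_tmul, mul'_apply] at key2
  rw [conv_repr _ _ r]
  calc ∑ i ∈ r.index,
      (TensorProduct.map (antipode (R := k) (A := H)) (antipode k) ∘ₗ
        (TensorProduct.comm k H H).toLinearMap ∘ₗ Coalgebra.comul) (r.left i) *
        Coalgebra.comul (R := k) (r.right i)
      = ∑ i ∈ r.index, ∑ j ∈ (a₁ i).index,
          (antipode (R := k) ((a₁ i).right j) ⊗ₜ[k] antipode (R := k) ((a₁ i).left j)) *
            Coalgebra.comul (R := k) (r.right i) := by
        refine Finset.sum_congr rfl fun i _ => ?_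
        have hG : (TensorProduct.map (antipode (R := k) (A := H)) (antipode k) ∘ₗ
            (TensorProduct.comm k H H).toLinearMap ∘ₗ Coalgebra.comul) (r.left i)
            = ∑ j ∈ (a₁ i).index,
                antipode (R := k) ((a₁ i).right j) ⊗ₜ[k] antipode (R := k) ((a₁ i).left j) := by
          simp only [comp_apply, LinearEquiv.coe_coe, ← (a₁ i).eq, map_sum,
            TensorProduct.comm_tmul, TensorProduct.map_tmul]
        rw [hG, Finset.sum_mul]
    _ = ∑ i ∈ r.index, ∑ j ∈ (a₂ i).index,
          (antipode (R := k) ((a₂ i).left j) ⊗ₜ[k] antipode (R := k) (r.left i)) *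
            Coalgebra.comul (R := k) ((a₂ i).right j) := key2
    _ = ∑ i ∈ r.index, (1 : H) ⊗ₜ[k] (antipode (R := k) (r.left i) * r.right i) :=
        Finset.sum_congr rfl fun i _ => lemmaA (r.left i) (r.right i) (a₂ i)
    _ = convUnit k (H ⊗[k] H) a := by
        rw [← TensorProduct.tmul_sum, sum_antipode_mul_eq_algebraMap_counit r, convUnit_apply,
          Algebra.algebraMap_eq_smul_one, TensorProduct.tmul_smul,
          Algebra.algebraMap_eq_smul_one (A := H ⊗[k] H), Algebra.TensorProduct.one_def]

lemma comul_antipode' (a : H) :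
    Coalgebra.comul (R := k) (antipode (R := k) a)
      = TensorProduct.map (antipode (R := k)) (antipode (R := k))
          (TensorProduct.comm k H H (Coalgebra.comul a)) := by
  have h := conv_unique (Coalgebra.comul (R := k) (A := H))
    (Coalgebra.comul ∘ₗ antipode (R := k) (A := H))
    (TensorProduct.map (antipode (R := k) (A := H)) (antipode k) ∘ₗ
      (TensorProduct.comm k H H).toLinearMap ∘ₗ Coalgebra.comul)
    conv_comul_comulAntipode conv_antipodeFlip_comul
  have := LinearMap.congr_fun h a
  simpa only [comp_apply, LinearEquiv.coe_coe] using this.symm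

section Main

variable {k H : Type*} [Field k] [Ring H] [HopfAlgebra k H]

set_option maxHeartbeats 1000000 in
set_option synthInstance.maxHeartbeats 400000 in
lemma dir1 (I : Submodule k H) (hleft : ∀ (h : H), ∀ x ∈ I, h * x ∈ I) (h : H)
    (hh : LinearMap.lTensor H I.mkQ (Coalgebra.comul h) = h ⊗ₜ[k] I.mkQ 1) :
    LinearMap.rTensor H I.mkQ (Coalgebra.comul (antipode (R := k) h))
      = I.mkQ 1 ⊗ₜ[k] antipode (R := k) h := by
  set Φ : (H ⊗[k] H) ⊗[k] H →ₗ[k] (H ⧸ I) ⊗[k] H :=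
    TensorProduct.map (I.mkQ ∘ₗ LinearMap.mul' k H ∘ₗ
        (antipode (R := k) (A := H)).rTensor H) (antipode (R := k)) ∘ₗ
      (TensorProduct.comm k H (H ⊗[k] H)).toLinearMap ∘ₗ
      (TensorProduct.assoc k H H H).toLinearMap with hΦ
  have hΦsymm : ∀ z : H ⊗[k] (H ⊗[k] H), Φ ((TensorProduct.assoc k H H H).symm z)
      = TensorProduct.map (I.mkQ ∘ₗ LinearMap.mul' k H ∘ₗ
          (antipode (R := k) (A := H)).rTensor H) (antipode (R := k))
          ((TensorProduct.comm k H (H ⊗[k] H)) z) := by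
    intro z
    rw [hΦ]
    simp only [comp_apply, LinearEquiv.coe_coe, LinearEquiv.apply_symm_apply]
  have hker : Coalgebra.comul (R := k) h - h ⊗ₜ[k] (1 : H)
      ∈ LinearMap.ker (LinearMap.lTensor H I.mkQ) := by
    rw [LinearMap.mem_ker, map_sub, hh, LinearMap.lTensor_tmul, sub_self]
  rw [lTensor_mkQ] at hker
  obtain ⟨T, hT⟩ := hker
  have hΔ : Coalgebra.comul (R := k) h
      = h ⊗ₜ[k] (1 : H) + LinearMap.lTensor H I.subtype T := by
    rw [hT]; abel
  have master := congrArg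
    (fun z => Φ ((Coalgebra.comul (R := k) (A := H)).rTensor H z)) hΔ
  simp only [map_add] at master
  -- (i)
  have step1 : Φ ((Coalgebra.comul (R := k) (A := H)).rTensor H (Coalgebra.comul h))
      = I.mkQ 1 ⊗ₜ[k] antipode (R := k) h := by
    have hco := Coalgebra.coassoc_symm_apply (R := k) h
    rw [← hco, hΦsymm, ← (ℛ k h).eq]
    simp only [map_sum, LinearMap.lTensor_tmul, TensorProduct.comm_tmul,
      TensorProduct.map_tmul, comp_apply]
    have term : ∀ i ∈ (ℛ k h).index,
        I.mkQ (LinearMap.mul' k H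
            ((antipode (R := k) (A := H)).rTensor H (Coalgebra.comul ((ℛ k h).right i))))
          ⊗ₜ[k] antipode (R := k) ((ℛ k h).left i)
        = Coalgebra.counit (R := k) ((ℛ k h).right i) •
            (((TensorProduct.mk k (H ⧸ I) H) (I.mkQ 1)) ∘ₗ
              antipode (R := k) (A := H)) ((ℛ k h).left i) := by
      intro i _
      rw [mul_antipode_rTensor_comul_apply, Algebra.algebraMap_eq_smul_one, map_smul]
      exact (TensorProduct.smul_tmul' _ _ _).symm
    rw [Finset.sum_congr rfl term]
    have hψ : ∑ i ∈ (ℛ k h).index, Coalgebra.counit (R := k) ((ℛ k h).right i) •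
        (((TensorProduct.mk k (H ⧸ I) H) (I.mkQ 1)) ∘ₗ
          antipode (R := k) (A := H)) ((ℛ k h).left i)
        = (((TensorProduct.mk k (H ⧸ I) H) (I.mkQ 1)) ∘ₗ antipode (R := k) (A := H))
            (∑ i ∈ (ℛ k h).index,
              Coalgebra.counit (R := k) ((ℛ k h).right i) • (ℛ k h).left i) := by
      rw [map_sum]
      exact Finset.sum_congr rfl fun i _ => (map_smul _ _ _).symm
    rw [hψ, sum_counit_smul_left (ℛ k h)]
    rfl
  -- (ii)
  have step2 : Φ ((Coalgebra.comul (R := k) (A := H)).rTensor H (h ⊗ₜ[k] (1 : H)))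
      = LinearMap.rTensor H I.mkQ (Coalgebra.comul (antipode (R := k) h)) := by
    rw [LinearMap.rTensor_tmul, hΦ, comul_antipode' h, ← (ℛ k h).eq]
    simp only [TensorProduct.sum_tmul, map_sum, comp_apply, LinearEquiv.coe_coe,
      TensorProduct.assoc_tmul, TensorProduct.comm_tmul, TensorProduct.map_tmul,
      LinearMap.rTensor_tmul, LinearMap.mul'_apply, mul_one]
  -- (iii)
  have step3 : ∀ T' : H ⊗[k] I,
      Φ ((Coalgebra.comul (R := k) (A := H)).rTensor H (LinearMap.lTensor H I.subtype T'))
        = 0 := by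
    intro T'
    induction T' using TensorProduct.induction_on with
    | zero => simp
    | add u v hu hv => rw [map_add, map_add, map_add, hu, hv, add_zero]
    | tmul a x =>
      rw [LinearMap.lTensor_tmul, LinearMap.rTensor_tmul, hΦ, ← (ℛ k a).eq]
      simp only [TensorProduct.sum_tmul, map_sum, comp_apply, LinearEquiv.coe_coe,
        TensorProduct.assoc_tmul, TensorProduct.comm_tmul, TensorProduct.map_tmul,
        LinearMap.rTensor_tmul, LinearMap.mul'_apply, Submodule.subtype_apply]
      refine Finset.sum_eq_zero fun i _ => ?_
      have hz : I.mkQ (antipode (R := k) ((ℛ k a).right i) * (x : H)) = 0 := by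
        rw [Submodule.mkQ_apply]
        exact (Submodule.Quotient.mk_eq_zero I).2 (hleft _ _ x.2)
      rw [hz, TensorProduct.zero_tmul]
  rw [step1, step2, step3 T, add_zero] at master
  exact master.symm

variable (hS : Function.Bijective (antipode (R := k) (A := H)))

/-- The inverse of the antipode, as a linear map. -/
noncomputable def Sinv : H →ₗ[k] H :=
  ((LinearEquiv.ofBijective (antipode (R := k) (A := H)) hS).symm : H ≃ₗ[k] H)

lemma Sinv_antipode (x : H) : Sinv hS (antipode (R := k) x) = x :=
  (LinearEquiv.ofBijective (antipode (R := k) (A := H)) hS).symm_apply_apply x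

lemma antipode_Sinv (x : H) : antipode (R := k) (Sinv hS x) = x :=
  (LinearEquiv.ofBijective (antipode (R := k) (A := H)) hS).apply_symm_apply x

lemma counit_Sinv (y : H) :
    Coalgebra.counit (R := k) (Sinv hS y) = Coalgebra.counit (R := k) y := by
  have h := counit_antipode' (k := k) (Sinv hS y)
  rw [antipode_Sinv hS y] at h
  exact h.symm

lemma map_Sinv_map_antipode (z : H ⊗[k] H) :
    TensorProduct.map (Sinv hS) (Sinv hS)
      (TensorProduct.map (antipode (R := k)) (antipode (R := k)) z) = z := by
  have hcomp : TensorProduct.map (Sinv hS) (Sinv hS) ∘ₗ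
      TensorProduct.map (antipode (R := k) (A := H)) (antipode (R := k)) = LinearMap.id := by
    rw [← TensorProduct.map_comp]
    have h1 : Sinv hS ∘ₗ antipode (R := k) (A := H) = LinearMap.id :=
      LinearMap.ext fun x => Sinv_antipode hS x
    rw [h1, TensorProduct.map_id]
  simpa using LinearMap.congr_fun hcomp z

lemma comm_symm_map (f g : H →ₗ[k] H) (z : H ⊗[k] H) :
    (TensorProduct.comm k H H).symm (TensorProduct.map f g z)
      = TensorProduct.map g f ((TensorProduct.comm k H H).symm z) := by
  induction z using TensorProduct.induction_on with
  | zero => simp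
  | tmul x y => simp [TensorProduct.comm_symm_tmul]
  | add u v hu hv => simp only [map_add, hu, hv]

lemma comul_Sinv (y : H) :
    Coalgebra.comul (R := k) (Sinv hS y)
      = TensorProduct.map (Sinv hS) (Sinv hS)
          ((TensorProduct.comm k H H) (Coalgebra.comul y)) := by
  have h1 := comul_antipode' (k := k) (Sinv hS y)
  rw [antipode_Sinv hS y] at h1
  have h2 := congrArg (TensorProduct.map (Sinv hS) (Sinv hS)) h1
  rw [map_Sinv_map_antipode hS] at h2
  have h3 := congrArg (TensorProduct.comm k H H).symm h2
  rw [LinearEquiv.symm_apply_apply] at h3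
  have h5 : ∀ z : H ⊗[k] H,
      (TensorProduct.comm k H H).symm z = TensorProduct.comm k H H z := fun z => by
    induction z using TensorProduct.induction_on with
    | zero => simp
    | tmul x y => simp [TensorProduct.comm_symm_tmul]
    | add u v hu hv => simp only [map_add, hu, hv]
  rw [← h3, comm_symm_map, h5]

lemma mulSinv (y : H) :
    LinearMap.mul' k H (TensorProduct.map (Sinv hS) LinearMap.id
      ((TensorProduct.comm k H H) (Coalgebra.comul y)))
      = algebraMap k H (Coalgebra.counit (R := k) y) := by
  have h0 := mul_antipode_lTensor_comul_apply (R := k) (a := Sinv hS y)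
  rw [comul_Sinv hS y, counit_Sinv hS y] at h0
  have hcomp : (antipode (R := k) (A := H)).lTensor H ∘ₗ
      TensorProduct.map (Sinv hS) (Sinv hS)
      = TensorProduct.map (Sinv hS) LinearMap.id := by
    apply TensorProduct.ext'
    intro x y
    simp only [comp_apply, TensorProduct.map_tmul, LinearMap.lTensor_tmul,
      antipode_Sinv hS, LinearMap.id_coe, id_eq]
  have h1 : (antipode (R := k) (A := H)).lTensor H
      (TensorProduct.map (Sinv hS) (Sinv hS)
        ((TensorProduct.comm k H H) (Coalgebra.comul y)))
      = TensorProduct.map (Sinv hS) LinearMap.id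
          ((TensorProduct.comm k H H) (Coalgebra.comul y)) := by
    rw [← comp_apply, hcomp]
  rw [h1] at h0
  exact h0

set_option maxHeartbeats 1000000 in
set_option synthInstance.maxHeartbeats 400000 in
lemma dir2 (I : Submodule k H) (hleft : ∀ (h : H), ∀ x ∈ I, h * x ∈ I) (g : H)
    (hg : LinearMap.rTensor H I.mkQ (Coalgebra.comul g) = I.mkQ 1 ⊗ₜ[k] g) :
    LinearMap.lTensor H I.mkQ (Coalgebra.comul (Sinv hS g))
      = Sinv hS g ⊗ₜ[k] I.mkQ 1 := by
  set Ψ : H ⊗[k] (H ⊗[k] H) →ₗ[k] H ⊗[k] (H ⧸ I) :=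
    TensorProduct.map (Sinv hS) (I.mkQ ∘ₗ LinearMap.mul' k H ∘ₗ (Sinv hS).rTensor H) ∘ₗ
      (TensorProduct.assoc k H H H).toLinearMap ∘ₗ
      (TensorProduct.comm k H (H ⊗[k] H)).toLinearMap ∘ₗ
      LinearMap.lTensor H (TensorProduct.comm k H H).toLinearMap with hΨ
  have hker : Coalgebra.comul (R := k) g - (1 : H) ⊗ₜ[k] g
      ∈ LinearMap.ker (LinearMap.rTensor H I.mkQ) := by
    rw [LinearMap.mem_ker, map_sub, hg, LinearMap.rTensor_tmul, sub_self]
  rw [rTensor_mkQ] at hker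
  obtain ⟨T, hT⟩ := hker
  have hΔ : Coalgebra.comul (R := k) g
      = (1 : H) ⊗ₜ[k] g + LinearMap.rTensor H I.subtype T := by
    rw [hT]; abel
  have master := congrArg
    (fun z => Ψ ((Coalgebra.comul (R := k) (A := H)).lTensor H z)) hΔ
  simp only [map_add] at master
  -- (i)
  have step1 : Ψ ((Coalgebra.comul (R := k) (A := H)).lTensor H (Coalgebra.comul g))
      = Sinv hS g ⊗ₜ[k] I.mkQ 1 := by
    rw [← Coalgebra.coassoc_apply (R := k) g, ← (ℛ k g).eq]
    simp only [map_sum, LinearMap.rTensor_tmul]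
    have term : ∀ i ∈ (ℛ k g).index,
        Ψ ((TensorProduct.assoc k H H H)
            (Coalgebra.comul ((ℛ k g).left i) ⊗ₜ[k] (ℛ k g).right i))
        = Coalgebra.counit (R := k) ((ℛ k g).left i) •
            ((((TensorProduct.mk k H (H ⧸ I)).flip (I.mkQ 1)) ∘ₗ Sinv hS)
              ((ℛ k g).right i)) := by
      intro i _
      have hid : ∑ j ∈ (ℛ k ((ℛ k g).left i)).index,
          Sinv hS ((ℛ k ((ℛ k g).left i)).right j) * (ℛ k ((ℛ k g).left i)).left j
          = algebraMap k H (Coalgebra.counit (R := k) ((ℛ k g).left i)) := by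
        have h0 := mulSinv hS ((ℛ k g).left i)
        rw [← (ℛ k ((ℛ k g).left i)).eq] at h0
        simpa only [map_sum, TensorProduct.comm_tmul, TensorProduct.map_tmul,
          LinearMap.mul'_apply, LinearMap.id_coe, id_eq] using h0
      rw [← (ℛ k ((ℛ k g).left i)).eq, hΨ]
      simp only [TensorProduct.sum_tmul, map_sum, comp_apply, LinearEquiv.coe_coe,
        TensorProduct.assoc_tmul, LinearMap.lTensor_tmul, TensorProduct.comm_tmul,
        TensorProduct.map_tmul, LinearMap.rTensor_tmul, LinearMap.mul'_apply]
      rw [← TensorProduct.tmul_sum, ← map_sum, hid, Algebra.algebraMap_eq_smul_one,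
        map_smul, TensorProduct.tmul_smul]
      rfl
    rw [Finset.sum_congr rfl term]
    have hψ : ∑ i ∈ (ℛ k g).index, Coalgebra.counit (R := k) ((ℛ k g).left i) •
        ((((TensorProduct.mk k H (H ⧸ I)).flip (I.mkQ 1)) ∘ₗ Sinv hS) ((ℛ k g).right i))
        = ((((TensorProduct.mk k H (H ⧸ I)).flip (I.mkQ 1)) ∘ₗ Sinv hS)
            (∑ i ∈ (ℛ k g).index,
              Coalgebra.counit (R := k) ((ℛ k g).left i) • (ℛ k g).right i)) := by
      rw [map_sum]
      exact Finset.sum_congr rfl fun i _ => (map_smul _ _ _).symm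
    rw [hψ, sum_counit_smul_right (ℛ k g)]
    rfl
  -- (ii)
  have step2 : Ψ ((Coalgebra.comul (R := k) (A := H)).lTensor H ((1 : H) ⊗ₜ[k] g))
      = LinearMap.lTensor H I.mkQ (Coalgebra.comul (Sinv hS g)) := by
    rw [LinearMap.lTensor_tmul, hΨ, comul_Sinv hS g, ← (ℛ k g).eq]
    simp only [TensorProduct.tmul_sum, map_sum, comp_apply, LinearEquiv.coe_coe,
      LinearMap.lTensor_tmul, TensorProduct.comm_tmul, TensorProduct.assoc_tmul,
      TensorProduct.map_tmul, LinearMap.rTensor_tmul, LinearMap.mul'_apply, mul_one]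
  -- (iii)
  have step3 : ∀ T' : (I : Submodule k H) ⊗[k] H,
      Ψ ((Coalgebra.comul (R := k) (A := H)).lTensor H
        (LinearMap.rTensor H I.subtype T')) = 0 := by
    intro T'
    induction T' using TensorProduct.induction_on with
    | zero => simp
    | add u v hu hv => rw [map_add, map_add, map_add, hu, hv, add_zero]
    | tmul x a =>
      rw [LinearMap.rTensor_tmul, LinearMap.lTensor_tmul, hΨ, ← (ℛ k a).eq]
      simp only [TensorProduct.tmul_sum, map_sum, comp_apply, LinearEquiv.coe_coe,
        LinearMap.lTensor_tmul, TensorProduct.comm_tmul, TensorProduct.assoc_tmul,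
        TensorProduct.map_tmul, LinearMap.rTensor_tmul, LinearMap.mul'_apply,
        Submodule.subtype_apply]
      refine Finset.sum_eq_zero fun i _ => ?_
      have hz : I.mkQ (Sinv hS ((ℛ k a).left i) * (x : H)) = 0 := by
        rw [Submodule.mkQ_apply]
        exact (Submodule.Quotient.mk_eq_zero I).2 (hleft _ _ x.2)
      rw [hz, TensorProduct.tmul_zero]
  rw [step1, step2, step3 T, add_zero] at master
  exact master.symm

end Main

end HopfProofAux

/-- Let `H` be a Hopf algebra over a field `k` with bijective antipode `S`
and let `C = H/I` be a left `H`-module factor coalgebra (`I` a left ideal coideal). Then the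
left `C`-coinvariants of `H` equal the image under `S` of the right `C`-coinvariants. -/
theorem leftCoinvariants_eq_antipode_image_rightCoinvariants
    (k H : Type*) [Field k] [Ring H] [HopfAlgebra k H]
    (hS : Function.Bijective (antipode (R := k) (A := H)))
    (I : Submodule k H)
    (hleft : ∀ (h : H), ∀ x ∈ I, h * x ∈ I)
    (hcoideal : IsCoideal k H I) :
    leftCoinvariants k H I = antipode (R := k) '' rightCoinvariants k H I := by
  ext h
  simp only [leftCoinvariants, rightCoinvariants, Set.mem_setOf_eq, Set.mem_image]
  constructor
  · intro hmem
    exact ⟨HopfProofAux.Sinv hS h, HopfProofAux.dir2 hS I hleft h hmem,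
      HopfProofAux.antipode_Sinv hS h⟩
  · rintro ⟨x, hx, hxh⟩
    subst hxh
    exact HopfProofAux.dir1 I hleft x hx
end
end

section
/- Let H be a Hopf algebra over a field k, A a right coideal subalgebra, C = H/HA⁺ the associated left H-module factor coalgebra with quotient map π. Then the dominion of A in H, namely {h ∈ H : h ⊗ 1 = 1 ⊗ h in H ⊗_A H}, equals the coinvariant subalgebra {h ∈ H : (π ⊗ id)Δ(h) = π(1) ⊗ h}. In particular, A is a dominion subalgebra (equal to its dominion) if and only if A = {h ∈ H : (π ⊗ id)Δ(h) = π(1) ⊗ h}. -/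
open TensorProduct LinearMap Coalgebra HopfAlgebra

set_option synthInstance.maxHeartbeats 400000
set_option maxHeartbeats 1000000
set_option linter.unnecessarySimpa false

variable (k : Type*) [Field k]

/-- `A` is a right coideal subalgebra of `H`: `Δ(A) ⊆ A ⊗ H`. -/
def IsRightCoidealSubalgebra (H : Type*) [Ring H] [HopfAlgebra k H]
    (A : Subalgebra k H) : Prop :=
  ∀ a ∈ A, Coalgebra.comul a ∈
    LinearMap.range (TensorProduct.mapIncl (Subalgebra.toSubmodule A) (⊤ : Submodule k H))

/-- The left ideal coideal `HA⁺` of `H`, as a `k`-submodule. -/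
noncomputable def HAplus (H : Type*) [Ring H] [HopfAlgebra k H] (A : Subalgebra k H) :
    Submodule k H :=
  Submodule.span k {z : H | ∃ h : H, ∃ a ∈ A, Coalgebra.counit (R := k) a = 0 ∧ z = h * a}

/-- The defining relations of `H ⊗_A H` inside `H ⊗ H`. -/
noncomputable def balancedRel (H : Type*) [Ring H] [HopfAlgebra k H] (A : Subalgebra k H) :
    Submodule k (H ⊗[k] H) :=
  Submodule.span k {z : H ⊗[k] H | ∃ (x y : H) (a : ↥A),
    z = (x * (a : H)) ⊗ₜ[k] y - x ⊗ₜ[k] ((a : H) * y)}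

/-- The dominion of `A` in `H`: elements `h` with `h ⊗ 1 = 1 ⊗ h` in `H ⊗_A H`. -/
noncomputable def dominion (H : Type*) [Ring H] [HopfAlgebra k H] (A : Subalgebra k H) :
    Set H :=
  {h : H | h ⊗ₜ[k] (1 : H) - (1 : H) ⊗ₜ[k] h ∈ balancedRel k H A}

/-- The left `C`-coinvariants of `H` for `C = H/HA⁺` with quotient map `π`:
`{h : (π ⊗ id)Δ(h) = π(1) ⊗ h}`. -/
noncomputable def leftCoinvariantsHAplus (H : Type*) [Ring H] [HopfAlgebra k H]
    (A : Subalgebra k H) : Set H :=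
  {h : H | LinearMap.rTensor H (HAplus k H A).mkQ (Coalgebra.comul h) =
    (HAplus k H A).mkQ 1 ⊗ₜ[k] h}

noncomputable section AntipodeAntiMul

variable {k} {H : Type*} [Ring H] [HopfAlgebra k H]

/-- comultiplication on `H ⊗ H`. -/
def DD (k H : Type*) [CommRing k] [Ring H] [HopfAlgebra k H] :
    H ⊗[k] H →ₗ[k] (H ⊗[k] H) ⊗[k] (H ⊗[k] H) :=
  (TensorProduct.tensorTensorTensorComm k H H H H).toLinearMap ∘ₗ
    TensorProduct.map Coalgebra.comul Coalgebra.comul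

/-- counit on `H ⊗ H`. -/
def EE (k H : Type*) [CommRing k] [Ring H] [HopfAlgebra k H] : H ⊗[k] H →ₗ[k] k :=
  LinearMap.mul' k k ∘ₗ TensorProduct.map Coalgebra.counit Coalgebra.counit

/-- convolution of linear maps `H ⊗ H → H`. -/
def conv (f g : H ⊗[k] H →ₗ[k] H) : H ⊗[k] H →ₗ[k] H :=
  LinearMap.mul' k H ∘ₗ TensorProduct.map f g ∘ₗ DD k H

def ee (k H : Type*) [CommRing k] [Ring H] [HopfAlgebra k H] : H ⊗[k] H →ₗ[k] H :=
  Algebra.linearMap k H ∘ₗ EE k H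

def W1 (k H : Type*) [CommRing k] [Ring H] [HopfAlgebra k H] :
    ((H ⊗[k] H) ⊗[k] H) ⊗[k] ((H ⊗[k] H) ⊗[k] H) →ₗ[k]
      ((H ⊗[k] H) ⊗[k] (H ⊗[k] H)) ⊗[k] (H ⊗[k] H) :=
  TensorProduct.map (TensorProduct.tensorTensorTensorComm k H H H H).toLinearMap LinearMap.id ∘ₗ
    (TensorProduct.tensorTensorTensorComm k (H ⊗[k] H) H (H ⊗[k] H) H).toLinearMap

def W2 (k H : Type*) [CommRing k] [Ring H] [HopfAlgebra k H] :
    (H ⊗[k] (H ⊗[k] H)) ⊗[k] (H ⊗[k] (H ⊗[k] H)) →ₗ[k]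
      (H ⊗[k] H) ⊗[k] ((H ⊗[k] H) ⊗[k] (H ⊗[k] H)) :=
  TensorProduct.map LinearMap.id (TensorProduct.tensorTensorTensorComm k H H H H).toLinearMap ∘ₗ
    (TensorProduct.tensorTensorTensorComm k H (H ⊗[k] H) H (H ⊗[k] H)).toLinearMap

lemma claimA : rTensor (H ⊗[k] H) (DD k H) ∘ₗ DD k H =
    W1 k H ∘ₗ TensorProduct.map (rTensor H Coalgebra.comul ∘ₗ Coalgebra.comul)
      (rTensor H Coalgebra.comul ∘ₗ Coalgebra.comul) := by
  apply TensorProduct.ext'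
  intro x y
  have key : ∀ u v : H ⊗[k] H,
      rTensor (H ⊗[k] H) (DD k H) ((TensorProduct.tensorTensorTensorComm k H H H H) (u ⊗ₜ v)) =
        W1 k H ((rTensor H Coalgebra.comul u) ⊗ₜ (rTensor H Coalgebra.comul v)) := by
    intro u v
    induction u using TensorProduct.induction_on with
    | zero => simp
    | tmul p q =>
      induction v using TensorProduct.induction_on with
      | zero => simp
      | tmul r s => simp [W1, DD]
      | add v₁ v₂ h1 h2 => simp only [tmul_add, map_add, h1, h2]
    | add u₁ u₂ h1 h2 => simp only [add_tmul, map_add, h1, h2]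
  simp only [LinearMap.comp_apply, TensorProduct.map_tmul, DD, LinearEquiv.coe_coe]
  exact key _ _

lemma claimB : lTensor (H ⊗[k] H) (DD k H) ∘ₗ DD k H =
    W2 k H ∘ₗ TensorProduct.map (lTensor H Coalgebra.comul ∘ₗ Coalgebra.comul)
      (lTensor H Coalgebra.comul ∘ₗ Coalgebra.comul) := by
  apply TensorProduct.ext'
  intro x y
  have key : ∀ u v : H ⊗[k] H,
      lTensor (H ⊗[k] H) (DD k H) ((TensorProduct.tensorTensorTensorComm k H H H H) (u ⊗ₜ v)) =
        W2 k H ((lTensor H Coalgebra.comul u) ⊗ₜ (lTensor H Coalgebra.comul v)) := by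
    intro u v
    induction u using TensorProduct.induction_on with
    | zero => simp
    | tmul p q =>
      induction v using TensorProduct.induction_on with
      | zero => simp
      | tmul r s => simp [W2, DD]
      | add v₁ v₂ h1 h2 => simp only [tmul_add, map_add, h1, h2]
    | add u₁ u₂ h1 h2 => simp only [add_tmul, map_add, h1, h2]
  simp only [LinearMap.comp_apply, TensorProduct.map_tmul, DD, LinearEquiv.coe_coe]
  exact key _ _

lemma claimShuffle :
    (TensorProduct.assoc k (H ⊗[k] H) (H ⊗[k] H) (H ⊗[k] H)).toLinearMap ∘ₗ W1 k H =
      W2 k H ∘ₗ TensorProduct.map (TensorProduct.assoc k H H H).toLinearMap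
        (TensorProduct.assoc k H H H).toLinearMap := by
  apply TensorProduct.ext_fourfold'
  intro u n v q
  induction u using TensorProduct.induction_on with
  | zero => simp
  | tmul p q' =>
    induction v using TensorProduct.induction_on with
    | zero => simp
    | tmul r s => simp [W1, W2]
    | add v₁ v₂ h1 h2 =>
      simp only [add_tmul, tmul_add, map_add, h1, h2]
  | add u₁ u₂ h1 h2 => simp only [add_tmul, map_add, h1, h2]

lemma coassocDD :
    (TensorProduct.assoc k (H ⊗[k] H) (H ⊗[k] H) (H ⊗[k] H)).toLinearMap ∘ₗ
        rTensor (H ⊗[k] H) (DD k H) ∘ₗ DD k H = lTensor (H ⊗[k] H) (DD k H) ∘ₗ DD k H := by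
  rw [claimA, claimB, ← Coalgebra.coassoc]
  rw [← LinearMap.comp_assoc, claimShuffle]
  rw [LinearMap.comp_assoc, ← TensorProduct.map_comp]


end AntipodeAntiMul

noncomputable section AntipodeAntiMul2

variable {k} {H : Type*} [Ring H] [HopfAlgebra k H]

private lemma convL_apply (f g h : H ⊗[k] H →ₗ[k] H) (w : (H ⊗[k] H) ⊗[k] (H ⊗[k] H)) :
    TensorProduct.map (conv f g) h w =
      TensorProduct.map (LinearMap.mul' k H) LinearMap.id
        (TensorProduct.map (TensorProduct.map f g) h (rTensor (H ⊗[k] H) (DD k H) w)) := by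
  induction w using TensorProduct.induction_on with
  | zero => simp
  | tmul u v => simp [conv]
  | add w₁ w₂ h1 h2 => simp only [map_add, h1, h2]

private lemma convR_apply (f g h : H ⊗[k] H →ₗ[k] H) (w : (H ⊗[k] H) ⊗[k] (H ⊗[k] H)) :
    TensorProduct.map f (conv g h) w =
      TensorProduct.map LinearMap.id (LinearMap.mul' k H)
        (TensorProduct.map f (TensorProduct.map g h) (lTensor (H ⊗[k] H) (DD k H) w)) := by
  induction w using TensorProduct.induction_on with
  | zero => simp
  | tmul u v => simp [conv]
  | add w₁ w₂ h1 h2 => simp only [map_add, h1, h2]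

lemma convAssoc (f g h : H ⊗[k] H →ₗ[k] H) :
    conv (conv f g) h = conv f (conv g h) := by
  have main : ∀ w : ((H ⊗[k] H) ⊗[k] (H ⊗[k] H)) ⊗[k] (H ⊗[k] H),
      LinearMap.mul' k H (TensorProduct.map (LinearMap.mul' k H) LinearMap.id
        (TensorProduct.map (TensorProduct.map f g) h w)) =
      LinearMap.mul' k H (TensorProduct.map LinearMap.id (LinearMap.mul' k H)
        (TensorProduct.map f (TensorProduct.map g h)
          ((TensorProduct.assoc k (H ⊗[k] H) (H ⊗[k] H) (H ⊗[k] H)) w))) := by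
    have hc : LinearMap.mul' k H ∘ₗ TensorProduct.map (LinearMap.mul' k H) LinearMap.id ∘ₗ
        TensorProduct.map (TensorProduct.map f g) h =
      (LinearMap.mul' k H ∘ₗ TensorProduct.map LinearMap.id (LinearMap.mul' k H) ∘ₗ
        TensorProduct.map f (TensorProduct.map g h)) ∘ₗ
          (TensorProduct.assoc k (H ⊗[k] H) (H ⊗[k] H) (H ⊗[k] H)).toLinearMap := by
      apply TensorProduct.ext_threefold
      intro u v w
      simp [mul_assoc]
    intro w
    simpa using LinearMap.congr_fun hc w
  have co : ∀ u : H ⊗[k] H,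
      (TensorProduct.assoc k (H ⊗[k] H) (H ⊗[k] H) (H ⊗[k] H))
          (rTensor (H ⊗[k] H) (DD k H) (DD k H u)) =
        lTensor (H ⊗[k] H) (DD k H) (DD k H u) := by
    intro u
    simpa using LinearMap.congr_fun (coassocDD (k := k) (H := H)) u
  apply LinearMap.ext
  intro u
  show LinearMap.mul' k H (TensorProduct.map (conv f g) h (DD k H u)) =
    LinearMap.mul' k H (TensorProduct.map f (conv g h) (DD k H u))
  rw [convL_apply, convR_apply, main, co]

lemma convUnitLeft (f : H ⊗[k] H →ₗ[k] H) : conv (ee k H) f = f := by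
  have key : ∀ u v : H ⊗[k] H,
      rTensor (H ⊗[k] H) (EE k H) ((TensorProduct.tensorTensorTensorComm k H H H H) (u ⊗ₜ v)) =
        (TensorProduct.map (LinearMap.mul' k k) LinearMap.id ∘ₗ
            (TensorProduct.tensorTensorTensorComm k k H k H).toLinearMap)
          ((rTensor H Coalgebra.counit u) ⊗ₜ (rTensor H Coalgebra.counit v)) := by
    intro u v
    induction u using TensorProduct.induction_on with
    | zero => simp
    | tmul p q =>
      induction v using TensorProduct.induction_on with
      | zero => simp
      | tmul r s => simp [EE]
      | add v₁ v₂ h1 h2 => simp only [tmul_add, map_add, h1, h2]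
    | add u₁ u₂ h1 h2 => simp only [add_tmul, map_add, h1, h2]
  have e1 : ∀ w : (H ⊗[k] H) ⊗[k] (H ⊗[k] H),
      TensorProduct.map (ee k H) f w =
        TensorProduct.map (Algebra.linearMap k H) f (rTensor (H ⊗[k] H) (EE k H) w) := by
    intro w
    induction w using TensorProduct.induction_on with
    | zero => simp
    | tmul u v => simp [ee]
    | add w₁ w₂ h1 h2 => simp only [map_add, h1, h2]
  apply TensorProduct.ext'
  intro x y
  have hD : DD k H (x ⊗ₜ[k] y) = (TensorProduct.tensorTensorTensorComm k H H H H)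
      ((Coalgebra.comul x) ⊗ₜ (Coalgebra.comul y)) := by simp [DD]
  show LinearMap.mul' k H (TensorProduct.map (ee k H) f (DD k H (x ⊗ₜ[k] y))) = f (x ⊗ₜ[k] y)
  rw [e1, hD, key, Coalgebra.rTensor_counit_comul, Coalgebra.rTensor_counit_comul]
  simp

lemma convUnitRight (f : H ⊗[k] H →ₗ[k] H) : conv f (ee k H) = f := by
  have key : ∀ u v : H ⊗[k] H,
      lTensor (H ⊗[k] H) (EE k H) ((TensorProduct.tensorTensorTensorComm k H H H H) (u ⊗ₜ v)) =
        (TensorProduct.map LinearMap.id (LinearMap.mul' k k) ∘ₗ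
            (TensorProduct.tensorTensorTensorComm k H k H k).toLinearMap)
          ((lTensor H Coalgebra.counit u) ⊗ₜ (lTensor H Coalgebra.counit v)) := by
    intro u v
    induction u using TensorProduct.induction_on with
    | zero => simp
    | tmul p q =>
      induction v using TensorProduct.induction_on with
      | zero => simp
      | tmul r s => simp [EE]
      | add v₁ v₂ h1 h2 => simp only [tmul_add, map_add, h1, h2]
    | add u₁ u₂ h1 h2 => simp only [add_tmul, map_add, h1, h2]
  have e1 : ∀ w : (H ⊗[k] H) ⊗[k] (H ⊗[k] H),
      TensorProduct.map f (ee k H) w =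
        TensorProduct.map f (Algebra.linearMap k H) (lTensor (H ⊗[k] H) (EE k H) w) := by
    intro w
    induction w using TensorProduct.induction_on with
    | zero => simp
    | tmul u v => simp [ee]
    | add w₁ w₂ h1 h2 => simp only [map_add, h1, h2]
  apply TensorProduct.ext'
  intro x y
  have hD : DD k H (x ⊗ₜ[k] y) = (TensorProduct.tensorTensorTensorComm k H H H H)
      ((Coalgebra.comul x) ⊗ₜ (Coalgebra.comul y)) := by simp [DD]
  show LinearMap.mul' k H (TensorProduct.map f (ee k H) (DD k H (x ⊗ₜ[k] y))) = f (x ⊗ₜ[k] y)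
  rw [e1, hD, key, Coalgebra.lTensor_counit_comul, Coalgebra.lTensor_counit_comul]
  simp

end AntipodeAntiMul2

noncomputable section AntipodeAntiMul3

variable {k} {H : Type*} [Ring H] [HopfAlgebra k H]

/-- `x ⊗ y ↦ S(y) * S(x)`. -/
def GG (k H : Type*) [CommRing k] [Ring H] [HopfAlgebra k H] : H ⊗[k] H →ₗ[k] H :=
  LinearMap.mul' k H ∘ₗ TensorProduct.map (HopfAlgebra.antipode k) (HopfAlgebra.antipode k) ∘ₗ
    (TensorProduct.comm k H H).toLinearMap

lemma mulmul_ttc (u v : H ⊗[k] H) :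
    TensorProduct.map (LinearMap.mul' k H) (LinearMap.mul' k H)
      ((TensorProduct.tensorTensorTensorComm k H H H H) (u ⊗ₜ v)) = u * v := by
  induction u using TensorProduct.induction_on with
  | zero => simp
  | tmul p q =>
    induction v using TensorProduct.induction_on with
    | zero => simp
    | tmul r s => simp [Algebra.TensorProduct.tmul_mul_tmul]
    | add v₁ v₂ h1 h2 => simp only [tmul_add, map_add, mul_add, h1, h2]
  | add u₁ u₂ h1 h2 => simp only [add_tmul, map_add, add_mul, h1, h2]

lemma convFM : conv (HopfAlgebra.antipode k ∘ₗ LinearMap.mul' k H) (LinearMap.mul' k H)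
    = ee k H := by
  have e1 : ∀ w : (H ⊗[k] H) ⊗[k] (H ⊗[k] H),
      TensorProduct.map (HopfAlgebra.antipode (R := k) (A := H) ∘ₗ LinearMap.mul' k H)
          (LinearMap.mul' k H) w =
        rTensor H (HopfAlgebra.antipode k)
          (TensorProduct.map (LinearMap.mul' k H) (LinearMap.mul' k H) w) := by
    intro w
    induction w using TensorProduct.induction_on with
    | zero => simp
    | tmul u v => simp
    | add w₁ w₂ h1 h2 => simp only [map_add, h1, h2]
  apply TensorProduct.ext'
  intro x y
  show LinearMap.mul' k H (TensorProduct.map _ _ (DD k H (x ⊗ₜ[k] y))) = ee k H (x ⊗ₜ[k] y)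
  have hD : DD k H (x ⊗ₜ[k] y) = (TensorProduct.tensorTensorTensorComm k H H H H)
      ((Coalgebra.comul x) ⊗ₜ (Coalgebra.comul y)) := by simp [DD]
  rw [hD, e1, mulmul_ttc, ← Bialgebra.comul_mul,
    HopfAlgebra.mul_antipode_rTensor_comul_apply, Bialgebra.counit_mul]
  simp [ee, EE]

lemma GG_tmul (u v : H) : GG k H (u ⊗ₜ[k] v) =
    HopfAlgebra.antipode (R := k) v * HopfAlgebra.antipode (R := k) u := by
  simp [GG]

lemma convMG : conv (LinearMap.mul' k H) (GG k H) = ee k H := by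
  apply TensorProduct.ext'
  intro x y
  show LinearMap.mul' k H (TensorProduct.map _ _ (DD k H (x ⊗ₜ[k] y))) = ee k H (x ⊗ₜ[k] y)
  set r := Coalgebra.Repr.arbitrary k x with hr
  set s := Coalgebra.Repr.arbitrary k y with hs
  have hD : DD k H (x ⊗ₜ[k] y) = ∑ i ∈ r.index, ∑ j ∈ s.index,
      (r.left i ⊗ₜ[k] s.left j) ⊗ₜ[k] (r.right i ⊗ₜ[k] s.right j) := by
    have : DD k H (x ⊗ₜ[k] y) = (TensorProduct.tensorTensorTensorComm k H H H H)
        ((Coalgebra.comul x) ⊗ₜ (Coalgebra.comul y)) := by simp [DD]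
    rw [this, ← r.eq, ← s.eq]
    simp only [sum_tmul, tmul_sum, map_sum, TensorProduct.tensorTensorTensorComm_tmul]
    rw [Finset.sum_comm]
  rw [hD]
  simp only [map_sum, TensorProduct.map_tmul, GG_tmul, LinearMap.mul'_apply]
  calc ∑ i ∈ r.index, ∑ j ∈ s.index, (r.left i * s.left j) *
        (HopfAlgebra.antipode (R := k) (s.right j) * HopfAlgebra.antipode (R := k) (r.right i))
      = ∑ i ∈ r.index, ∑ j ∈ s.index, r.left i * ((s.left j *
          HopfAlgebra.antipode (R := k) (s.right j)) * HopfAlgebra.antipode (R := k) (r.right i))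
        := by simp only [mul_assoc]
    _ = ∑ i ∈ r.index, r.left i * ((∑ j ∈ s.index, s.left j *
          HopfAlgebra.antipode (R := k) (s.right j)) * HopfAlgebra.antipode (R := k) (r.right i))
        := by
          refine Finset.sum_congr rfl fun i _ => ?_
          rw [← Finset.mul_sum, Finset.sum_mul]
    _ = ∑ i ∈ r.index, r.left i *
          (algebraMap k H (Coalgebra.counit y) * HopfAlgebra.antipode (R := k) (r.right i))
        := by rw [HopfAlgebra.sum_mul_antipode_eq_algebraMap_counit]
    _ = (∑ i ∈ r.index, r.left i * HopfAlgebra.antipode (R := k) (r.right i)) *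
          algebraMap k H (Coalgebra.counit y)
        := by
          rw [Finset.sum_mul]
          refine Finset.sum_congr rfl fun i _ => ?_
          rw [Algebra.commutes, ← mul_assoc]
    _ = algebraMap k H (Coalgebra.counit x) * algebraMap k H (Coalgebra.counit y)
        := by rw [HopfAlgebra.sum_mul_antipode_eq_algebraMap_counit]
    _ = ee k H (x ⊗ₜ[k] y) := by simp [ee, EE]

theorem antipode_mul' (x y : H) :
    HopfAlgebra.antipode (R := k) (x * y) =
      HopfAlgebra.antipode (R := k) y * HopfAlgebra.antipode (R := k) x := by
  have hFG : HopfAlgebra.antipode (R := k) (A := H) ∘ₗ LinearMap.mul' k H = GG k H := by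
    calc HopfAlgebra.antipode (R := k) (A := H) ∘ₗ LinearMap.mul' k H
        = conv (HopfAlgebra.antipode (R := k) (A := H) ∘ₗ LinearMap.mul' k H) (ee k H) :=
          (convUnitRight _).symm
      _ = conv (HopfAlgebra.antipode (R := k) (A := H) ∘ₗ LinearMap.mul' k H)
            (conv (LinearMap.mul' k H) (GG k H)) := by rw [convMG]
      _ = conv (conv (HopfAlgebra.antipode (R := k) (A := H) ∘ₗ LinearMap.mul' k H)
            (LinearMap.mul' k H)) (GG k H) := (convAssoc _ _ _).symm
      _ = conv (ee k H) (GG k H) := by rw [convFM]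
      _ = GG k H := convUnitLeft _
  have := LinearMap.congr_fun hFG (x ⊗ₜ[k] y)
  simpa [GG_tmul] using this

theorem antipode_one' : HopfAlgebra.antipode (R := k) (1 : H) = 1 := by
  have := HopfAlgebra.mul_antipode_rTensor_comul_apply (R := k) (a := (1 : H))
  rw [Bialgebra.comul_one, Algebra.TensorProduct.one_def] at this
  simpa using this

end AntipodeAntiMul3

/- ===== main development ===== -/

noncomputable section Main

variable {k} {H : Type*} [Ring H] [HopfAlgebra k H] {A : Subalgebra k H}

/-- `x ⊗ y ↦ Σ x₁ ⊗ x₂y` (and, precomposed variant for `σ`). -/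
def phiAux (k : Type*) [Field k] (H : Type*) [Ring H] [HopfAlgebra k H] :
    H ⊗[k] H →ₗ[k] H ⊗[k] H :=
  lTensor H (LinearMap.mul' k H) ∘ₗ (TensorProduct.assoc k H H H).toLinearMap ∘ₗ
    rTensor H Coalgebra.comul

/-- `x ⊗ y ↦ Σ x₁ ⊗ S(x₂)y`. -/
def sigAux (k : Type*) [Field k] (H : Type*) [Ring H] [HopfAlgebra k H] :
    H ⊗[k] H →ₗ[k] H ⊗[k] H :=
  lTensor H (LinearMap.mul' k H) ∘ₗ (TensorProduct.assoc k H H H).toLinearMap ∘ₗ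
    rTensor H (lTensor H (HopfAlgebra.antipode k) ∘ₗ Coalgebra.comul)

private lemma assocMul (y : H) (u : H ⊗[k] H) :
    lTensor H (LinearMap.mul' k H) ((TensorProduct.assoc k H H H) (u ⊗ₜ[k] y)) =
      lTensor H (LinearMap.mulRight k y) u := by
  induction u using TensorProduct.induction_on with
  | zero => simp
  | tmul p q => simp
  | add u₁ u₂ h1 h2 => simp only [add_tmul, map_add, h1, h2]

lemma phiAux_tmul (x y : H) :
    phiAux k H (x ⊗ₜ[k] y) = lTensor H (LinearMap.mulRight k y) (Coalgebra.comul x) := by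
  simp only [phiAux, LinearMap.comp_apply, rTensor_tmul, LinearEquiv.coe_coe]
  exact assocMul y _

lemma sigAux_tmul (x y : H) :
    sigAux k H (x ⊗ₜ[k] y) =
      lTensor H (LinearMap.mulRight k y ∘ₗ HopfAlgebra.antipode k) (Coalgebra.comul x) := by
  simp only [sigAux, LinearMap.comp_apply, rTensor_tmul, LinearEquiv.coe_coe]
  rw [assocMul, ← LinearMap.lTensor_comp_apply]

lemma mkQ_mul_mem (p : H) {a : H} (ha : a ∈ A) :
    (HAplus k H A).mkQ (p * a) =
      Coalgebra.counit (R := k) a • (HAplus k H A).mkQ p := by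
  have hmem : p * a - (Coalgebra.counit (R := k) a) • p ∈ HAplus k H A := by
    apply Submodule.subset_span
    refine ⟨p, a - algebraMap k H (Coalgebra.counit (R := k) a),
      A.sub_mem ha (A.algebraMap_mem _), ?_, ?_⟩
    · simp
    · rw [mul_sub, Algebra.algebraMap_eq_smul_one, mul_smul_comm, mul_one]
  have h0 : (HAplus k H A).mkQ (p * a - (Coalgebra.counit (R := k) a) • p) = 0 := by
    rwa [Submodule.mkQ_apply, Submodule.Quotient.mk_eq_zero]
  rw [map_sub, map_smul] at h0
  rw [sub_eq_zero] at h0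
  exact h0

/-- Key step for `Φ`: multiplying in an element of `A ⊗ H` can be replaced by the
`(ε ⊗ id)`-contraction. -/
lemma Phi_move {v : H ⊗[k] H}
    (hv : v ∈ LinearMap.range (TensorProduct.mapIncl
      (Subalgebra.toSubmodule A) (⊤ : Submodule k H))) (u : H ⊗[k] H) (y : H) :
    rTensor H (HAplus k H A).mkQ (lTensor H (LinearMap.mulRight k y) (u * v)) =
      rTensor H (HAplus k H A).mkQ (lTensor H (LinearMap.mulRight k y)
        (u * ((1 : H) ⊗ₜ[k] (TensorProduct.lid k H (rTensor H (Coalgebra.counit (R := k)) v))))) := by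
  obtain ⟨w, rfl⟩ := hv
  induction w using TensorProduct.induction_on with
  | zero => simp
  | tmul a b =>
    simp only [TensorProduct.mapIncl, TensorProduct.map_tmul, Submodule.coe_subtype]
    induction u using TensorProduct.induction_on with
    | zero => simp
    | tmul p q =>
      simp only [Algebra.TensorProduct.tmul_mul_tmul, rTensor_tmul,
        TensorProduct.lid_tmul, lTensor_tmul, LinearMap.mulRight_apply,
        Submodule.mkQ_apply]
      rw [mul_one]
      have hmk := mkQ_mul_mem (A := A) p (a.2)
      rw [Submodule.mkQ_apply, Submodule.mkQ_apply] at hmk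
      rw [hmk, TensorProduct.smul_tmul]
      congr 1
      rw [mul_smul_comm, smul_mul_assoc]
    | add u₁ u₂ h1 h2 => simp only [add_mul, map_add, h1, h2]
  | add w₁ w₂ h1 h2 =>
    simp only [map_add] at h1 h2 ⊢
    simp only [mul_add, map_add, TensorProduct.tmul_add, h1, h2]

lemma Phi_vanish {z : H ⊗[k] H} (hA : IsRightCoidealSubalgebra k H A)
    (hz : z ∈ balancedRel k H A) :
    rTensor H (HAplus k H A).mkQ (phiAux k H z) = 0 := by
  induction hz using Submodule.span_induction with
  | mem z hz =>
    obtain ⟨x, y, a, rfl⟩ := hz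
    rw [map_sub, map_sub, phiAux_tmul, phiAux_tmul, Bialgebra.comul_mul]
    rw [Phi_move (hA a a.2)]
    have hc : TensorProduct.lid k H (rTensor H (Coalgebra.counit (R := k))
        (Coalgebra.comul (a : H))) = (a : H) := by
      rw [Coalgebra.rTensor_counit_comul]
      simp
    rw [hc]
    have hmul : Coalgebra.comul (R := k) x * ((1 : H) ⊗ₜ[k] (a : H)) =
        lTensor H (LinearMap.mulRight k (a : H)) (Coalgebra.comul (R := k) x) := by
      induction (Coalgebra.comul (R := k) x) using TensorProduct.induction_on with
      | zero => simp
      | tmul p q => simp [Algebra.TensorProduct.tmul_mul_tmul]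
      | add u₁ u₂ h1 h2 => simp only [add_mul, map_add, h1, h2]
    rw [hmul, ← LinearMap.lTensor_comp_apply]
    have hcomp : LinearMap.mulRight k y ∘ₗ LinearMap.mulRight k (a : H) =
        LinearMap.mulRight k ((a : H) * y) := by
      apply LinearMap.ext; intro z; simp [mul_assoc]
    rw [hcomp, sub_self]
  | zero => simp
  | add x y _ _ h1 h2 => rw [map_add, map_add, h1, h2, add_zero]
  | smul c x _ h1 => rw [map_smul, map_smul, h1, smul_zero]

lemma dominion_subset (hA : IsRightCoidealSubalgebra k H A) :
    dominion k H A ⊆ leftCoinvariantsHAplus k H A := by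
  intro h hh
  have := Phi_vanish hA hh
  rw [map_sub, map_sub, phiAux_tmul, phiAux_tmul, Bialgebra.comul_one,
    Algebra.TensorProduct.one_def, LinearMap.mulRight_one, lTensor_id] at this
  simp only [lTensor_tmul, LinearMap.mulRight_apply, one_mul, rTensor_tmul,
    LinearMap.id_coe, id_eq] at this
  rw [sub_eq_zero] at this
  simpa [leftCoinvariantsHAplus, Submodule.mkQ_apply] using this

lemma sig_comul (h : H) : sigAux k H (Coalgebra.comul h) = h ⊗ₜ[k] (1 : H) := by
  have claimSig : ∀ w : H ⊗[k] (H ⊗[k] H),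
      lTensor H (LinearMap.mul' k H) ((TensorProduct.assoc k H H H)
        (rTensor H (lTensor H (HopfAlgebra.antipode (R := k)))
          ((TensorProduct.assoc k H H H).symm w))) =
      lTensor H (LinearMap.mul' k H ∘ₗ rTensor H (HopfAlgebra.antipode (R := k))) w := by
    intro w
    induction w using TensorProduct.induction_on with
    | zero => simp
    | tmul x t =>
      induction t using TensorProduct.induction_on with
      | zero => simp
      | tmul y z => simp
      | add t₁ t₂ h1 h2 => simp only [TensorProduct.tmul_add, map_add, h1, h2]
    | add w₁ w₂ h1 h2 => simp only [map_add, h1, h2]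
  have step1 : sigAux k H (Coalgebra.comul h) =
      lTensor H (LinearMap.mul' k H) ((TensorProduct.assoc k H H H)
        (rTensor H (lTensor H (HopfAlgebra.antipode (R := k)))
          (rTensor H (Coalgebra.comul (R := k)) (Coalgebra.comul h)))) := by
    simp only [sigAux, LinearMap.comp_apply, LinearMap.rTensor_comp_apply]
    rfl
  rw [step1, ← Coalgebra.coassoc_symm_apply, claimSig, ← LinearMap.lTensor_comp_apply]
  have hax : (LinearMap.mul' k H ∘ₗ rTensor H (HopfAlgebra.antipode (R := k)))
      ∘ₗ Coalgebra.comul = Algebra.linearMap k H ∘ₗ Coalgebra.counit := by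
    rw [LinearMap.comp_assoc]
    exact HopfAlgebra.mul_antipode_rTensor_comul
  rw [hax, LinearMap.lTensor_comp_apply, Coalgebra.lTensor_counit_comul]
  simp

lemma sig_one_tmul (h : H) : sigAux k H ((1 : H) ⊗ₜ[k] h) = (1 : H) ⊗ₜ[k] h := by
  rw [sigAux_tmul, Bialgebra.comul_one, Algebra.TensorProduct.one_def]
  simp [antipode_one']

/-- the crucial well-definedness: `σ` maps `HA⁺ ⊗ H` into the balanced relations. -/
lemma sig_rel (hA : IsRightCoidealSubalgebra k H A) {a : H} (ha : a ∈ A)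
    (hea : Coalgebra.counit (R := k) a = 0) (h0 y : H) :
    sigAux k H ((h0 * a) ⊗ₜ[k] y) ∈ balancedRel k H A := by
  rw [sigAux_tmul, Bialgebra.comul_mul]
  set f := LinearMap.mulRight k y ∘ₗ HopfAlgebra.antipode (R := k) (A := H) with hf
  suffices hgen : ∀ u : H ⊗[k] H,
      lTensor H f (u * Coalgebra.comul a) ∈ balancedRel k H A from hgen _
  intro u
  induction u using TensorProduct.induction_on with
  | zero => simpa using (balancedRel k H A).zero_mem
  | tmul p q =>
    set g : H ⊗[k] H →ₗ[k] H :=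
      LinearMap.mul' k H ∘ₗ lTensor H (f ∘ₗ LinearMap.mulLeft k q) with hg
    have claim1 : ∀ v ∈ LinearMap.range (TensorProduct.mapIncl
        (Subalgebra.toSubmodule A) (⊤ : Submodule k H)),
        lTensor H f ((p ⊗ₜ[k] q) * v) - p ⊗ₜ[k] g v ∈ balancedRel k H A := by
      rintro v ⟨w, rfl⟩
      induction w using TensorProduct.induction_on with
      | zero => simpa using (balancedRel k H A).zero_mem
      | tmul a' b =>
        apply Submodule.subset_span
        refine ⟨p, f (q * (b : H)), ⟨(a' : H), a'.2⟩, ?_⟩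
        simp only [TensorProduct.mapIncl, TensorProduct.map_tmul, Submodule.coe_subtype,
          Algebra.TensorProduct.tmul_mul_tmul, lTensor_tmul, hg, LinearMap.comp_apply,
          LinearMap.mul'_apply, LinearMap.mulLeft_apply]
      | add w₁ w₂ h1 h2 =>
        have := (balancedRel k H A).add_mem h1 h2
        simpa only [map_add, mul_add, TensorProduct.tmul_add, add_sub_add_comm] using this
    have claim2 : g (Coalgebra.comul a) = 0 := by
      have hfl : f ∘ₗ LinearMap.mulLeft k q =
          LinearMap.mulRight k (HopfAlgebra.antipode (R := k) q * y) ∘ₗ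
            HopfAlgebra.antipode (R := k) (A := H) := by
        apply LinearMap.ext; intro z
        simp only [LinearMap.comp_apply, LinearMap.mulLeft_apply, LinearMap.mulRight_apply, hf,
          antipode_mul', mul_assoc]
      have hpull : ∀ (c : H) (w : H ⊗[k] H),
          LinearMap.mul' k H (lTensor H (LinearMap.mulRight k c) w) =
            LinearMap.mul' k H w * c := by
        intro c w
        induction w using TensorProduct.induction_on with
        | zero => simp
        | tmul u' v' => simp [mul_assoc]
        | add w₁ w₂ h1 h2 => simp only [map_add, add_mul, h1, h2]
      have hsplit : lTensor H (LinearMap.mulRight k (HopfAlgebra.antipode (R := k) q * y) ∘ₗ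
          HopfAlgebra.antipode (R := k) (A := H)) (Coalgebra.comul a) =
          lTensor H (LinearMap.mulRight k (HopfAlgebra.antipode (R := k) q * y))
            (lTensor H (HopfAlgebra.antipode (R := k)) (Coalgebra.comul a)) := by
        rw [← LinearMap.lTensor_comp_apply]
      rw [hg]
      simp only [LinearMap.comp_apply]
      rw [hfl, hsplit, hpull, HopfAlgebra.mul_antipode_lTensor_comul_apply, hea,
        map_zero, zero_mul]
    have := claim1 (Coalgebra.comul a) (hA a ha)
    rw [claim2, TensorProduct.tmul_zero, sub_zero] at this
    exact this
  | add u₁ u₂ h1 h2 =>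
    have := (balancedRel k H A).add_mem h1 h2
    simpa only [add_mul, map_add] using this

lemma sig_mem (hA : IsRightCoidealSubalgebra k H A) {n : H} (hn : n ∈ HAplus k H A)
    (y : H) : sigAux k H (n ⊗ₜ[k] y) ∈ balancedRel k H A := by
  induction hn using Submodule.span_induction with
  | mem n hn =>
    obtain ⟨h0, a, ha, hea, rfl⟩ := hn
    exact sig_rel hA ha hea h0 y
  | zero => simpa using (balancedRel k H A).zero_mem
  | add n₁ n₂ _ _ h1 h2 =>
    have := (balancedRel k H A).add_mem h1 h2
    simpa only [TensorProduct.add_tmul, map_add] using this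
  | smul c n _ h1 =>
    rw [← TensorProduct.smul_tmul', map_smul]
    exact (balancedRel k H A).smul_mem c h1

lemma coinv_subset (hA : IsRightCoidealSubalgebra k H A) :
    leftCoinvariantsHAplus k H A ⊆ dominion k H A := by
  intro h hh
  have hker : Coalgebra.comul h - (1 : H) ⊗ₜ[k] h ∈
      LinearMap.ker (rTensor H (HAplus k H A).mkQ) := by
    rw [LinearMap.mem_ker, map_sub, hh, rTensor_tmul, sub_eq_zero]
  rw [rTensor_mkQ] at hker
  obtain ⟨w, hw⟩ := hker
  have heq : h ⊗ₜ[k] (1 : H) - (1 : H) ⊗ₜ[k] h =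
      sigAux k H (rTensor H (HAplus k H A).subtype w) := by
    rw [hw, map_sub, sig_comul, sig_one_tmul]
  rw [dominion, Set.mem_setOf_eq, heq]
  clear heq hw hh
  induction w using TensorProduct.induction_on with
  | zero => simpa using (balancedRel k H A).zero_mem
  | tmul n y => exact sig_mem hA n.2 y
  | add w₁ w₂ h1 h2 =>
    have := (balancedRel k H A).add_mem h1 h2
    simpa only [map_add] using this

end Main

/-- For a right coideal subalgebra `A` of a Hopf algebra `H` over a field
`k`, the dominion of `A` in `H` equals the subalgebra of left `C`-coinvariants for
`C = H/HA⁺`; in particular `A` is a dominion subalgebra iff `A` equals these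
coinvariants. -/
theorem dominion_eq_coinvariants
    (H : Type*) [Ring H] [HopfAlgebra k H] (A : Subalgebra k H)
    (hA : IsRightCoidealSubalgebra k H A) :
    dominion k H A = leftCoinvariantsHAplus k H A ∧
      ((A : Set H) = dominion k H A ↔ (A : Set H) = leftCoinvariantsHAplus k H A) := by
  have hEq : dominion k H A = leftCoinvariantsHAplus k H A :=
    Set.Subset.antisymm (dominion_subset hA) (coinv_subset hA)
  exact ⟨hEq, by rw [hEq]⟩
end
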